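/- Let ℓ ≥ 2 and s ≥ 1 be integers, and let G' be a connected bipartite (ℓ-1)-regular finite simple graph. Let G_s be the s-clique extension of G'. Then: (i) G_s is regular of valency ℓs - 1; (ii) G_s contains no induced copy of K_{1,ℓ}; and (iii) the smallest eigenvalue of G_s equals -ℓs + 2s - 1. -/

import Mathlib

open scoped Classical

/-- The adjacency matrix of a simple graph, over `ℝ`. -/
noncomputable def adjMat {V : Type*} [Fintype V] (G : SimpleGraph V) : Matrix V V ℝ :=
  Matrix.of fun i j => if G.Adj i j then (1 : ℝ) else 0

/-- The smallest (real) eigenvalue of a matrix. -/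
noncomputable def matMinEig {V : Type*} [Fintype V] (A : Matrix V V ℝ) : ℝ :=
  sInf {μ : ℝ | ∃ v : V → ℝ, v ≠ 0 ∧ A.mulVec v = μ • v}

/-- The smallest eigenvalue of a graph. -/
noncomputable def minEig {V : Type*} [Fintype V] (G : SimpleGraph V) : ℝ :=
  matMinEig (adjMat G)

/-- The degree (valency) of a vertex. -/
noncomputable def deg {V : Type*} [Fintype V] (G : SimpleGraph V) (v : V) : ℕ :=
  (G.neighborSet v).ncard
/-- The `s`-clique extension of a graph `H`: each vertex `x` is replaced by a clique
`{x} × Fin s`, and `(x,i)` is adjacent to `(y,j)` iff `x ~ y` in `H`, or `x = y` and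
`i ≠ j`. -/
def cliqueExt {V : Type*} (H : SimpleGraph V) (s : ℕ) : SimpleGraph (V × Fin s) :=
  SimpleGraph.fromRel (fun x y => H.Adj x.1 y.1 ∨ x.1 = y.1)

/-- The star `K_{1,t}`. -/
def starG (t : ℕ) : SimpleGraph (Fin (t + 1)) :=
  SimpleGraph.fromRel (fun x _ => x = 0)

/-! The adjacency matrix of the `s`-clique extension of `H` is `(A + I) ⊗ J - I`, so it acts on
`v : V × Fin s → ℝ` through the fibre sums `S x = ∑ i, v (x, i)`:
`(Ã v) (x, i) = ((A + I) S) x - v (x, i)`. Lifting the `±1` eigenvector of a bipartite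
`(ℓ-1)`-regular graph for `-(ℓ-1)` gives the eigenvalue `s (2 - ℓ) - 1`. Conversely
`v ⬝ Ã v = S ⬝ (A + I) S - v ⬝ v`, and `S ⬝ A S ≥ -(ℓ-1) S ⬝ S` by regularity while
`S ⬝ S ≤ s v ⬝ v` by Cauchy–Schwarz, which bounds every eigenvalue from below by the same number.

The leaves of an induced `K_{1,ℓ}` project injectively onto an independent set of `H` inside the
closed neighbourhood of the projection of the centre, and such a set has at most
`max 1 (ℓ - 1) < ℓ` elements. -/

open Finset Matrix SimpleGraph

lemma le_of_mulVec_eq_smul {n : Type*} [Fintype n] {A : Matrix n n ℝ} {v : n → ℝ} {c μ : ℝ}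
    (hv : v ≠ 0) (hAv : A *ᵥ v = μ • v) (hA : c * (v ⬝ᵥ v) ≤ v ⬝ᵥ (A *ᵥ v)) : c ≤ μ := by
  have hpos : 0 < v ⬝ᵥ v := by simpa using dotProduct_self_star_pos_iff.2 hv
  rw [hAv, dotProduct_smul, smul_eq_mul] at hA
  exact le_of_mul_le_mul_right hA hpos

section

variable {V : Type*}

lemma cliqueExt_adj (H : SimpleGraph V) {s : ℕ} (a b : V × Fin s) :
    (cliqueExt H s).Adj a b ↔ H.Adj a.1 b.1 ∨ (a.1 = b.1 ∧ a.2 ≠ b.2) := by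
  simp only [cliqueExt, fromRel_adj, ne_eq, Prod.ext_iff, H.adj_comm b.1 a.1, eq_comm (a := b.1)]
  by_cases h : H.Adj a.1 b.1 <;> aesop

lemma starG_adj (t : ℕ) (a b : Fin (t + 1)) :
    (starG t).Adj a b ↔ a ≠ b ∧ (a = 0 ∨ b = 0) := by
  simp [starG]

section Finite

variable [Fintype V]

lemma deg_eq_degree (G : SimpleGraph V) (v : V) : deg G v = G.degree v := by
  rw [deg, ← card_neighborFinset_eq_degree, ← Set.ncard_coe_finset, coe_neighborFinset]

lemma neighborFinset_cliqueExt (H : SimpleGraph V) (s : ℕ) (x : V) (i : Fin s) :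
    (cliqueExt H s).neighborFinset (x, i) = H.neighborFinset x ×ˢ univ ∪ {x} ×ˢ {i}ᶜ := by
  ext ⟨y, j⟩
  simp only [mem_neighborFinset, cliqueExt_adj, mem_union, mem_product, mem_univ, and_true,
    mem_singleton, mem_compl, eq_comm]

lemma degree_cliqueExt (H : SimpleGraph V) (s : ℕ) (x : V) (i : Fin s) :
    (cliqueExt H s).degree (x, i) = H.degree x * s + (s - 1) := by
  have hdisj : Disjoint (H.neighborFinset x ×ˢ (univ : Finset (Fin s))) ({x} ×ˢ {i}ᶜ) :=
    disjoint_product.2 (Or.inl (by simp))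
  rw [← card_neighborFinset_eq_degree, neighborFinset_cliqueExt, card_union_of_disjoint hdisj,
    card_product, card_product, card_neighborFinset_eq_degree, card_compl, card_singleton]
  simp

lemma SimpleGraph.IsIndepSet.card_le_of_subset_insert_neighborFinset {H : SimpleGraph V}
    {t : Finset V} (ht : H.IsIndepSet t) {x : V} (hsub : t ⊆ insert x (H.neighborFinset x)) :
    #t ≤ max 1 (H.degree x) := by
  by_cases hx : x ∈ t
  · have : t ⊆ {x} := fun y hy => by
      rcases mem_insert.1 (hsub hy) with rfl | hxy
      · exact mem_singleton_self y
      · exact absurd ((mem_neighborFinset _ _ _).1 hxy)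
          (ht hx hy (H.ne_of_adj ((mem_neighborFinset _ _ _).1 hxy)))
    exact (card_le_card this).trans (by simp)
  · have : t ⊆ H.neighborFinset x := fun y hy =>
      (mem_insert.1 (hsub hy)).resolve_left (by rintro rfl; exact hx hy)
    exact ((card_le_card this).trans (card_neighborFinset_eq_degree H x).le).trans
      (le_max_right _ _)

theorem isEmpty_starG_embedding_cliqueExt (H : SimpleGraph V) (s t : ℕ) (ht : 2 ≤ t)
    (hdeg : ∀ x, H.degree x < t) : IsEmpty (starG t ↪g cliqueExt H s) := by
  refine ⟨fun f => ?_⟩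
  let leaf : Fin t → V := fun k => (f k.succ).1
  have center_adj : ∀ k : Fin t, (cliqueExt H s).Adj (f 0) (f k.succ) := fun k =>
    f.map_rel_iff.2 ((starG_adj t _ _).2 ⟨(Fin.succ_ne_zero k).symm, Or.inl rfl⟩)
  have leaves_nonadj : ∀ k m : Fin t, ¬ (cliqueExt H s).Adj (f k.succ) (f m.succ) :=
    fun k m h => by simp [f.map_rel_iff, starG_adj, Fin.succ_ne_zero] at h
  have leaf_inj : Function.Injective leaf := fun k m hkm => by
    by_contra hne
    have hne' : (f k.succ).2 ≠ (f m.succ).2 := fun h =>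
      hne (Fin.succ_injective _ (f.injective (Prod.ext hkm h)))
    exact leaves_nonadj k m ((cliqueExt_adj H _ _).2 (Or.inr ⟨hkm, hne'⟩))
  have hindep : H.IsIndepSet (univ.image leaf : Set V) := by
    rw [coe_image, coe_univ, Set.image_univ]
    rintro _ ⟨k, rfl⟩ _ ⟨m, rfl⟩ -
    exact fun h => leaves_nonadj k m ((cliqueExt_adj H _ _).2 (Or.inl h))
  have hsub : univ.image leaf ⊆ insert (f 0).1 (H.neighborFinset (f 0).1) := by
    intro y hy
    obtain ⟨k, -, rfl⟩ := mem_image.1 hy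
    rcases (cliqueExt_adj H _ _).1 (center_adj k) with h | ⟨h, -⟩
    · exact mem_insert_of_mem ((mem_neighborFinset _ _ _).2 h)
    · exact h ▸ mem_insert_self _ _
  have := IsIndepSet.card_le_of_subset_insert_neighborFinset hindep hsub
  rw [card_image_of_injective _ leaf_inj, card_univ, Fintype.card_fin] at this
  have := hdeg (f 0).1
  omega

lemma neg_degree_mul_dotProduct_self_le {H : SimpleGraph V} {d : ℕ} (hd : H.IsRegularOfDegree d)
    (x : V → ℝ) : -(d : ℝ) * (x ⬝ᵥ x) ≤ x ⬝ᵥ (H.adjMatrix ℝ *ᵥ x) := by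
  have hleft : (∑ i, ∑ j, if H.Adj i j then x i ^ 2 else 0) = d * (x ⬝ᵥ x) := by
    calc (∑ i, ∑ j, if H.Adj i j then x i ^ 2 else 0) = ∑ i, (H.degree i : ℝ) * x i ^ 2 := by
          refine sum_congr rfl fun i _ => ?_
          simp_rw [degree_eq_sum_if_adj (R := ℝ), sum_mul, ite_mul, one_mul, zero_mul]
      _ = d * (x ⬝ᵥ x) := by simp only [hd _, dotProduct, mul_sum, sq]
  have hright : (∑ i, ∑ j, if H.Adj i j then x j ^ 2 else 0) = d * (x ⬝ᵥ x) := by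
    rw [Finset.sum_comm]
    simp_rw [H.adj_comm]
    exact hleft
  have hnonneg : 0 ≤ ∑ i, ∑ j, if H.Adj i j then (x i + x j) ^ 2 else 0 :=
    sum_nonneg fun i _ => sum_nonneg fun j _ => by split_ifs <;> positivity
  have hexpand : (∑ i, ∑ j, if H.Adj i j then (x i + x j) ^ 2 else 0) =
      (∑ i, ∑ j, if H.Adj i j then x i ^ 2 else 0) + (∑ i, ∑ j, if H.Adj i j then x j ^ 2 else 0)
        + 2 * x ⬝ᵥ (H.adjMatrix ℝ *ᵥ x) := by
    simp only [dotProduct_mulVec_adjMatrix, mul_sum, ← sum_add_distrib]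
    refine sum_congr rfl fun i _ => sum_congr rfl fun j _ => ?_
    split_ifs <;> ring
  linarith

def fiberSum {ι : Type*} [Fintype ι] (v : V × ι → ℝ) (x : V) : ℝ := ∑ i, v (x, i)

lemma fiberSum_dotProduct_self_le {ι : Type*} [Fintype ι] (v : V × ι → ℝ) :
    fiberSum v ⬝ᵥ fiberSum v ≤ Fintype.card ι * (v ⬝ᵥ v) := by
  calc fiberSum v ⬝ᵥ fiberSum v = ∑ x, (∑ i, v (x, i)) ^ 2 := by simp [dotProduct, fiberSum, sq]
    _ ≤ ∑ x, Fintype.card ι * ∑ i, v (x, i) ^ 2 :=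
        sum_le_sum fun x _ => by
          simpa using sq_sum_le_card_mul_sum_sq (s := univ) (f := fun i => v (x, i))
    _ = Fintype.card ι * (v ⬝ᵥ v) := by simp [dotProduct, mul_sum, Fintype.sum_prod_type, sq]

lemma adjMat_cliqueExt_apply (H : SimpleGraph V) (s : ℕ) (a b : V × Fin s) :
    adjMat (cliqueExt H s) a b =
      (H.adjMatrix ℝ + 1) a.1 b.1 - (1 : Matrix (V × Fin s) _ ℝ) a b := by
  obtain ⟨x, i⟩ := a
  obtain ⟨y, j⟩ := b
  by_cases hxy : x = y
  · subst hxy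
    by_cases hij : i = j <;> simp [adjMat, one_apply, cliqueExt_adj, hij]
  · simp [adjMat, one_apply, cliqueExt_adj, hxy]

lemma adjMat_cliqueExt_mulVec (H : SimpleGraph V) (s : ℕ) (v : V × Fin s → ℝ) :
    adjMat (cliqueExt H s) *ᵥ v = fun a => ((H.adjMatrix ℝ + 1) *ᵥ fiberSum v) a.1 - v a := by
  ext ⟨x, i⟩
  simp only [mulVec, dotProduct, adjMat_cliqueExt_apply, sub_mul, sum_sub_distrib, one_apply,
    ite_mul, one_mul, zero_mul, sum_ite_eq, mem_univ, if_true, Fintype.sum_prod_type, fiberSum,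
    mul_sum]

lemma dotProduct_adjMat_cliqueExt_mulVec (H : SimpleGraph V) (s : ℕ) (v : V × Fin s → ℝ) :
    v ⬝ᵥ (adjMat (cliqueExt H s) *ᵥ v) =
      fiberSum v ⬝ᵥ ((H.adjMatrix ℝ + 1) *ᵥ fiberSum v) - v ⬝ᵥ v := by
  rw [adjMat_cliqueExt_mulVec]
  simp only [dotProduct, mul_sub, sum_sub_distrib, Fintype.sum_prod_type, fiberSum, sum_mul]

lemma le_dotProduct_adjMat_cliqueExt_mulVec {H : SimpleGraph V} {d : ℕ}
    (hd : H.IsRegularOfDegree d) (hd1 : 1 ≤ d) (s : ℕ) (v : V × Fin s → ℝ) :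
    (s * (-(d : ℝ) + 1) - 1) * (v ⬝ᵥ v) ≤ v ⬝ᵥ (adjMat (cliqueExt H s) *ᵥ v) := by
  have hquad := neg_degree_mul_dotProduct_self_le hd (fiberSum v)
  have hcs := fiberSum_dotProduct_self_le v
  rw [Fintype.card_fin] at hcs
  have hd1' : (1 : ℝ) ≤ d := by exact_mod_cast hd1
  rw [dotProduct_adjMat_cliqueExt_mulVec, add_mulVec, one_mulVec, dotProduct_add]
  nlinarith [mul_le_mul_of_nonneg_left hcs (by linarith : (0 : ℝ) ≤ d - 1)]

lemma adjMat_cliqueExt_mulVec_eq_smul {H : SimpleGraph V} {w : V → ℝ} {θ : ℝ}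
    (hw : H.adjMatrix ℝ *ᵥ w = θ • w) (s : ℕ) :
    adjMat (cliqueExt H s) *ᵥ (fun a => w a.1) = (s * (θ + 1) - 1) • fun a => w a.1 := by
  have hsum : fiberSum (fun a : V × Fin s => w a.1) = (s : ℝ) • w := by
    ext x
    simp [fiberSum]
  ext a
  simp [adjMat_cliqueExt_mulVec, hsum, add_mulVec, mulVec_smul, hw]
  ring

lemma SimpleGraph.IsRegularOfDegree.exists_mulVec_eq_neg_smul [Nonempty V] {H : SimpleGraph V}
    {d : ℕ} (hd : H.IsRegularOfDegree d) (hc : H.Colorable 2) :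
    ∃ w : V → ℝ, w ≠ 0 ∧ H.adjMatrix ℝ *ᵥ w = (-(d : ℝ)) • w := by
  obtain ⟨c⟩ := hc
  let w : V → ℝ := fun x => if c x = 0 then 1 else -1
  have hw_adj : ∀ {x y}, H.Adj x y → w y = -w x := fun {x y} h => by
    have := c.valid h
    simp only [w]
    split_ifs <;> first | omega | norm_num
  refine ⟨w, fun h => ?_, ?_⟩
  · obtain ⟨x⟩ := ‹Nonempty V›
    have := congrFun h x
    simp only [w, Pi.zero_apply] at this
    split_ifs at this <;> norm_num at this
  · ext x
    rw [adjMatrix_mulVec_apply, sum_congr rfl fun y hy => hw_adj ((mem_neighborFinset _ _ _).1 hy),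
      sum_const, card_neighborFinset_eq_degree, hd x]
    simp

end Finite

end

/-- The `s`-clique extension of a connected bipartite `(ℓ-1)`-regular graph is
`(ℓs-1)`-regular, has no induced `K_{1,ℓ}`, and has smallest eigenvalue
`-ℓs + 2s - 1`. -/
theorem stmt12 (l s : ℕ) (hl : 2 ≤ l) (hs : 1 ≤ s)
    {V : Type*} [Fintype V] (G' : SimpleGraph V)
    (hconn : G'.Connected) (hbip : G'.Colorable 2)
    (hreg : ∀ v, deg G' v = l - 1) :
    (∀ x : V × Fin s, deg (cliqueExt G' s) x = l * s - 1) ∧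
    IsEmpty (starG l ↪g cliqueExt G' s) ∧
    minEig (cliqueExt G' s) = -(l : ℝ) * (s : ℝ) + 2 * (s : ℝ) - 1 := by
  have := hconn.nonempty
  have hreg' : G'.IsRegularOfDegree (l - 1) := fun v => (deg_eq_degree G' v).symm.trans (hreg v)
  refine ⟨fun ⟨x, i⟩ => ?_,
    isEmpty_starG_embedding_cliqueExt G' s l hl fun x => by rw [hreg' x]; omega, ?_⟩
  · rw [deg_eq_degree, degree_cliqueExt, hreg' x, Nat.sub_mul, one_mul]
    have := Nat.le_mul_of_pos_left s (by omega : 0 < l)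
    omega
  · have hm : (s : ℝ) * (-((l - 1 : ℕ) : ℝ) + 1) - 1 = -(l : ℝ) * s + 2 * s - 1 := by
      rw [Nat.cast_sub (by omega)]
      push_cast
      ring
    rw [minEig, matMinEig, ← hm]
    obtain ⟨w, hw0, hw⟩ := hreg'.exists_mulVec_eq_neg_smul hbip
    refine IsLeast.csInf_eq ⟨⟨_, fun h => hw0 (funext fun x => congrFun h (x, ⟨0, hs⟩)),
      adjMat_cliqueExt_mulVec_eq_smul hw s⟩, ?_⟩
    rintro μ ⟨v, hv, hAv⟩
    exact le_of_mulVec_eq_smul hv hAv (le_dotProduct_adjMat_cliqueExt_mulVec hreg' (by omega) s v)
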